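/- arXiv:1804.08870 — 4 statements merged into one kernel-verified Lean document; each statement's English description precedes it below -/
import Mathlib

section
/- Let (X,d,m) be a metric measure space satisfying a measure contraction-type property: for any x₀ ∈ X and measurable A ⊆ X with m(A) > 0 there is a dynamical optimal plan Π from δ_{x₀} to m|_A / m(A) with (e_t)_* Π ≤ (C / t^N) · m / m(A) for all t ∈ (0,1]. Suppose Y ⊆ X is closed with m(Y^ε) ≤ A ε² for all small ε > 0 (Y^ε the ε-neighborhood). Then for every x₀ ∈ X \ Y, the set of endpoints y such that every geodesic from x₀ to y meets Y has m-measure zero; that is, X \ Y is m-almost everywhere convex. -/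
open MeasureTheory Set Metric Filter Topology
open scoped ENNReal

/-!
Suppose the set `B` of endpoints `y` all of whose geodesics from `x₀` meet `Y` had positive
measure, and let `Π` be the dynamical plan from `δ_{x₀}` to `m|_B / m(B)`. A geodesic from `x₀`
can only meet `Y` after time `a = d(x₀, Y) / diam X`, and if it meets `Y` at time `t` then at
the grid time `⌈tn⌉ / n` it lies in the `diam X / n`-neighbourhood of `Y`. Summing the
contraction bound `(e_s)_* Π ≤ C a^{-N} m / m(B)` over the `n` grid times gives
`m(B) ≤ n · C a^{-N} · m(Y^{2 diam X / n}) = O(1 / n)`, because the neighbourhoods of `Y`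
have quadratically small measure.
-/

section

variable {X : Type*} [MetricSpace X]

-- Reducible, so that instances and lemmas about `{γ // IsConstSpeedGeodesic γ}` apply to the
-- subtype with the predicate spelled out.
abbrev IsConstSpeedGeodesic (γ : ℝ → X) : Prop :=
  ∀ s ∈ Icc (0 : ℝ) 1, ∀ t ∈ Icc (0 : ℝ) 1, dist (γ s) (γ t) = |s - t| * dist (γ 0) (γ 1)

def blockedEndpoints (x₀ : X) (Y : Set X) : Set X :=
  {y | ∀ γ : ℝ → X, IsConstSpeedGeodesic γ → γ 0 = x₀ → γ 1 = y → ∃ t ∈ Icc (0 : ℝ) 1, γ t ∈ Y}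

def geodesicsAvoiding (x₀ : X) (U : Set X) : Set (ℝ → X) :=
  {γ | IsConstSpeedGeodesic γ ∧ γ 0 = x₀ ∧ ∀ t ∈ Icc (0 : ℝ) 1, γ t ∉ U}

theorem exists_nat_div_mem_Icc_add_one_div {t : ℝ} (ht : t ∈ Icc (0 : ℝ) 1) {n : ℕ} (hn : 0 < n) :
    ∃ j ∈ Finset.Icc 1 n, (j / n : ℝ) ∈ Icc t (t + 1 / n) := by
  have hn' : (0 : ℝ) < n := Nat.cast_pos.2 hn
  have htn : 0 ≤ t * n := mul_nonneg ht.1 hn'.le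
  refine ⟨max 1 ⌈t * n⌉₊, Finset.mem_Icc.2 ⟨le_max_left _ _, max_le hn ?_⟩, ?_, ?_⟩
  · exact Nat.ceil_le.2 (by simpa using mul_le_mul_of_nonneg_right ht.2 hn'.le)
  · rw [le_div_iff₀ hn', Nat.cast_max, Nat.cast_one]
    exact (Nat.le_ceil _).trans (le_max_right _ _)
  · rw [div_le_iff₀ hn', add_mul, one_div_mul_cancel hn'.ne', Nat.cast_max, Nat.cast_one]
    exact max_le (by linarith) (Nat.ceil_lt_add_one htn).le

theorem tendsto_natCast_mul_ofReal_mul_div_sq (a b : ℝ) :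
    Tendsto (fun n : ℕ => (n : ℝ≥0∞) * ENNReal.ofReal (a * (b / n) ^ 2)) atTop (𝓝 0) := by
  have h : ∀ᶠ n : ℕ in atTop,
      ENNReal.ofReal (a * b ^ 2 / n) = (n : ℝ≥0∞) * ENNReal.ofReal (a * (b / n) ^ 2) := by
    filter_upwards [eventually_ne_atTop 0] with n hn
    rw [← ENNReal.ofReal_natCast, ← ENNReal.ofReal_mul n.cast_nonneg]
    congr 1
    field_simp
  simpa using (ENNReal.tendsto_ofReal (tendsto_const_div_atTop_nhds_zero_nat (a * b ^ 2))).congr' h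

theorem one_le_card_mul_of_ae_exists_mem {Ω α ι : Type*} [MeasurableSpace Ω] [MeasurableSpace α]
    {μ : Measure Ω} [IsProbabilityMeasure μ] {f : ι → Ω → α} (hf : ∀ i, Measurable (f i))
    {J : Finset ι} {S : Set α} (hS : MeasurableSet S) (hae : ∀ᵐ ω ∂μ, ∃ i ∈ J, f i ω ∈ S)
    {ν : Measure α} (hν : ∀ i ∈ J, μ.map (f i) ≤ ν) : 1 ≤ J.card * ν S :=
  calc 1 = μ univ := measure_univ.symm
    _ ≤ μ (⋃ i ∈ J, f i ⁻¹' S) :=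
      measure_mono_ae (hae.mono fun ω h _ => (by simpa using h : ω ∈ ⋃ i ∈ J, f i ⁻¹' S))
    _ ≤ ∑ i ∈ J, μ (f i ⁻¹' S) := measure_biUnion_finset_le _ _
    _ ≤ ∑ _ ∈ J, ν S := Finset.sum_le_sum fun i hi =>
      (Measure.map_apply (hf i) hS).symm.trans_le (Measure.le_iff'.1 (hν i hi) S)
    _ = J.card * ν S := by rw [Finset.sum_const, nsmul_eq_mul]

namespace IsConstSpeedGeodesic

variable {γ : ℝ → X}

theorem lipschitzOnWith (hγ : IsConstSpeedGeodesic γ) :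
    LipschitzOnWith (dist (γ 0) (γ 1)).toNNReal γ (Icc 0 1) :=
  LipschitzOnWith.of_dist_le_mul fun s hs t ht => by
    rw [hγ s hs t ht, Real.dist_eq, Real.coe_toNNReal _ dist_nonneg, mul_comm]

theorem continuousOn (hγ : IsConstSpeedGeodesic γ) : ContinuousOn γ (Icc 0 1) :=
  hγ.lipschitzOnWith.continuousOn

theorem exists_nat_div_mem_cthickening (hγ : IsConstSpeedGeodesic γ) {D : ℝ}
    (hD : dist (γ 0) (γ 1) ≤ D) {Y : Set X} {t : ℝ} (ht : t ∈ Icc (0 : ℝ) 1) (hγt : γ t ∈ Y)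
    {n : ℕ} (hn : 0 < n) :
    ∃ j ∈ Finset.Icc 1 n, infDist (γ 0) Y ≤ D * (j / n) ∧ γ (j / n) ∈ cthickening (D / n) Y := by
  obtain ⟨j, hj, hjt, hjt'⟩ := exists_nat_div_mem_Icc_add_one_div ht hn
  have hj1 : (j / n : ℝ) ∈ Icc (0 : ℝ) 1 :=
    ⟨ht.1.trans hjt, div_le_one_of_le₀ (by exact_mod_cast (Finset.mem_Icc.1 hj).2) n.cast_nonneg⟩
  have hd := dist_nonneg (x := γ 0) (y := γ 1)
  refine ⟨j, hj, ?_, mem_cthickening_of_dist_le _ _ _ _ hγt ?_⟩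
  · calc infDist (γ 0) Y ≤ dist (γ 0) (γ t) := infDist_le_dist_of_mem hγt
      _ = t * dist (γ 0) (γ 1) := by
        rw [hγ 0 (left_mem_Icc.2 zero_le_one) t ht, zero_sub, abs_neg, abs_of_nonneg ht.1]
      _ ≤ (j / n) * D := mul_le_mul hjt hD hd (ht.1.trans hjt)
      _ = D * (j / n) := mul_comm _ _
  · calc dist (γ (j / n)) (γ t) = (j / n - t) * dist (γ 0) (γ 1) := by
          rw [hγ _ hj1 t ht, abs_of_nonneg (sub_nonneg.2 hjt)]
      _ ≤ (1 / n) * D := mul_le_mul (by linarith) hD hd (by positivity)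
      _ = D / n := by ring

end IsConstSpeedGeodesic

theorem isClosed_setOf_isConstSpeedGeodesic : IsClosed {γ : ℝ → X | IsConstSpeedGeodesic γ} := by
  simp only [IsConstSpeedGeodesic, ofPred_forall]
  exact isClosed_iInter fun s => isClosed_iInter fun _ => isClosed_iInter fun t =>
    isClosed_iInter fun _ => isClosed_eq (by fun_prop) (by fun_prop)

theorem isClosed_geodesicsAvoiding (x₀ : X) {U : Set X} (hU : IsOpen U) :
    IsClosed (geodesicsAvoiding x₀ U) := by
  have hU' : IsClosed {γ : ℝ → X | ∀ t ∈ Icc (0 : ℝ) 1, γ t ∉ U} := by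
    simp only [ofPred_forall]
    exact isClosed_biInter fun t _ => (hU.preimage (continuous_apply t)).isClosed_compl
  exact isClosed_setOf_isConstSpeedGeodesic.inter
    ((isClosed_eq (continuous_apply 0) continuous_const).inter hU')

theorem geodesicsAvoiding_eq_iUnion_thickening (x₀ : X) {Y : Set X} (hY : IsClosed Y) :
    geodesicsAvoiding x₀ Y = ⋃ n : ℕ, geodesicsAvoiding x₀ (thickening (1 / (n + 1)) Y) := by
  refine Subset.antisymm (fun γ ⟨hγ, hγ0, hγY⟩ => ?_) (iUnion_subset fun n γ ⟨hγ, hγ0, hγY⟩ =>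
    ⟨hγ, hγ0, fun t ht hY => hγY t ht (self_subset_thickening (by positivity) _ hY)⟩)
  have hdisj : Disjoint (γ '' Icc 0 1) Y :=
    disjoint_left.2 fun _ ⟨t, ht, hγt⟩ hY => hγY t ht (hγt ▸ hY)
  obtain ⟨ε, hε, hεdisj⟩ := hdisj.exists_thickenings (isCompact_Icc.image_of_continuousOn
    hγ.continuousOn) hY
  obtain ⟨n, hn⟩ := exists_nat_one_div_lt hε
  refine mem_iUnion.2 ⟨n, hγ, hγ0, fun t ht hmem => hεdisj.ne_of_mem
    (self_subset_thickening hε _ (mem_image_of_mem γ ht)) (thickening_mono hn.le Y hmem) rfl⟩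

theorem blockedEndpoints_eq_compl_image (x₀ : X) (Y : Set X) :
    blockedEndpoints x₀ Y = ((fun γ : ℝ → X => γ 1) '' geodesicsAvoiding x₀ Y)ᶜ := by
  ext y
  simp only [blockedEndpoints, geodesicsAvoiding, mem_ofPred_eq, mem_compl_iff, mem_image,
    not_exists, not_and]
  refine ⟨fun h γ ⟨hγ, hγ0, hγY⟩ hγ1 => ?_, fun h γ hγ hγ0 hγ1 => ?_⟩
  · obtain ⟨t, ht, hγt⟩ := h γ hγ hγ0 hγ1
    exact hγY t ht hγt
  · by_contra! hγY
    exact h γ ⟨hγ, hγ0, hγY⟩ hγ1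

theorem measurableSet_blockedEndpoints [CompactSpace X] [MeasurableSpace X] [BorelSpace X]
    (x₀ : X) {Y : Set X} (hY : IsClosed Y) : MeasurableSet (blockedEndpoints x₀ Y) := by
  rw [blockedEndpoints_eq_compl_image, geodesicsAvoiding_eq_iUnion_thickening x₀ hY, image_iUnion]
  exact (MeasurableSet.iUnion fun n => ((isClosed_geodesicsAvoiding x₀ isOpen_thickening
    ).isCompact.image (continuous_apply 1)).isClosed.measurableSet).compl

section DynamicalPlan

variable [MeasurableSpace X]

theorem measurable_geodesic_eval (t : ℝ) :
    Measurable fun γ : {γ : ℝ → X // IsConstSpeedGeodesic γ} => γ.1 t :=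
  (measurable_pi_apply t).comp measurable_subtype_coe

variable [BorelSpace X]

theorem ae_hits_of_map_eq {x₀ : X} {Y : Set X} (hB : MeasurableSet (blockedEndpoints x₀ Y))
    {Pl : Measure {γ : ℝ → X // IsConstSpeedGeodesic γ}} {m : Measure X} {c : ℝ≥0∞}
    (hPl0 : Pl.map (fun γ => γ.1 0) = Measure.dirac x₀)
    (hPl1 : Pl.map (fun γ => γ.1 1) = c • m.restrict (blockedEndpoints x₀ Y)) :
    ∀ᵐ γ ∂Pl, γ.1 0 = x₀ ∧ ∃ t ∈ Icc (0 : ℝ) 1, γ.1 t ∈ Y := by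
  have h0 : ∀ᵐ γ ∂Pl, γ.1 0 = x₀ :=
    (ae_map_iff (measurable_geodesic_eval 0).aemeasurable measurableSet_eq).1
      (by rw [hPl0, ae_dirac_eq]; exact eventually_pure.2 rfl)
  have h1 : ∀ᵐ γ ∂Pl, γ.1 1 ∈ blockedEndpoints x₀ Y :=
    (ae_map_iff (measurable_geodesic_eval 1).aemeasurable hB).1
      (by rw [hPl1]; exact Measure.ae_smul_measure (ae_restrict_mem hB) c)
  filter_upwards [h0, h1] with γ h0 h1 using ⟨h0, h1 γ.1 γ.2 h0 rfl⟩

theorem one_le_mul_measure_cthickening_of_ae_hits {x₀ : X} {Y : Set X} {D : ℝ}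
    (hD : ∀ x y : X, dist x y ≤ D) {Pl : Measure {γ : ℝ → X // IsConstSpeedGeodesic γ}}
    [IsProbabilityMeasure Pl] (hae : ∀ᵐ γ ∂Pl, γ.1 0 = x₀ ∧ ∃ t ∈ Icc (0 : ℝ) 1, γ.1 t ∈ Y)
    {ν : Measure X} (hν : ∀ t ∈ Ioc (0 : ℝ) 1, infDist x₀ Y ≤ D * t → Pl.map (fun γ => γ.1 t) ≤ ν)
    {n : ℕ} (hn : 0 < n) : 1 ≤ n * ν (cthickening (D / n) Y) := by
  classical
  set J := (Finset.Icc 1 n).filter fun j : ℕ => infDist x₀ Y ≤ D * (j / n)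
  have hcover : ∀ᵐ γ ∂Pl, ∃ j ∈ J, γ.1 (j / n) ∈ cthickening (D / n) Y :=
    hae.mono fun γ ⟨h0, _, ht, hγt⟩ => by
      obtain ⟨j, hj, hδ, hmem⟩ := γ.2.exists_nat_div_mem_cthickening (hD _ _) ht hγt hn
      exact ⟨j, Finset.mem_filter.2 ⟨hj, h0 ▸ hδ⟩, hmem⟩
  have hJ : ∀ j ∈ J, (j / n : ℝ) ∈ Ioc (0 : ℝ) 1 := fun j hj => by
    obtain ⟨h1, hn⟩ := Finset.mem_Icc.1 (Finset.mem_filter.1 hj).1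
    exact ⟨by positivity, div_le_one_of_le₀ (by exact_mod_cast hn) n.cast_nonneg⟩
  calc 1 ≤ J.card * ν (cthickening (D / n) Y) :=
        one_le_card_mul_of_ae_exists_mem (fun j : ℕ => measurable_geodesic_eval ((j : ℝ) / n))
          isClosed_cthickening.measurableSet hcover
          fun j hj => hν _ (hJ j hj) (Finset.mem_filter.1 hj).2
    _ ≤ n * ν (cthickening (D / n) Y) := by
        gcongr
        exact (Finset.card_filter_le _ _).trans (by simp)

theorem measure_le_mul_measure_cthickening_of_ae_hits {m : Measure X} [IsFiniteMeasure m]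
    {B Y : Set X} (hB : m B ≠ 0) {x₀ : X} (hδ : 0 < infDist x₀ Y) {C N D : ℝ} (hC : 0 ≤ C)
    (hN : 0 ≤ N) (hD : ∀ x y : X, dist x y ≤ D) (hDpos : 0 < D)
    {Pl : Measure {γ : ℝ → X // IsConstSpeedGeodesic γ}} [IsProbabilityMeasure Pl]
    (hae : ∀ᵐ γ ∂Pl, γ.1 0 = x₀ ∧ ∃ t ∈ Icc (0 : ℝ) 1, γ.1 t ∈ Y)
    (hPl : ∀ t ∈ Ioc (0 : ℝ) 1,
      Pl.map (fun γ => γ.1 t) ≤ (ENNReal.ofReal (C / t ^ N) * (m B)⁻¹) • m)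
    {n : ℕ} (hn : 0 < n) :
    m B ≤ ENNReal.ofReal (C / (infDist x₀ Y / D) ^ N) * (n * m (cthickening (D / n) Y)) := by
  set κ := ENNReal.ofReal (C / (infDist x₀ Y / D) ^ N)
  have hν (t : ℝ) (ht : t ∈ Ioc (0 : ℝ) 1) (htδ : infDist x₀ Y ≤ D * t) :
      Pl.map (fun γ => γ.1 t) ≤ (κ * (m B)⁻¹) • m := by
    refine (hPl t ht).trans (Measure.le_iff'.2 fun S => ?_)
    simp only [Measure.smul_apply, smul_eq_mul]
    gcongr
    refine ENNReal.ofReal_le_ofReal (div_le_div_of_nonneg_left hC (by positivity) ?_)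
    exact Real.rpow_le_rpow (by positivity) ((div_le_iff₀' hDpos).2 htδ) hN
  have h1 := one_le_mul_measure_cthickening_of_ae_hits hD hae hν hn
  rw [Measure.smul_apply, smul_eq_mul] at h1
  calc m B = m B * 1 := (mul_one _).symm
    _ ≤ m B * (n * (κ * (m B)⁻¹ * m (cthickening (D / n) Y))) := by gcongr
    _ = κ * (n * m (cthickening (D / n) Y)) * (m B * (m B)⁻¹) := by ring
    _ = κ * (n * m (cthickening (D / n) Y)) := by
      rw [ENNReal.mul_inv_cancel hB (measure_ne_top m B), mul_one]

end DynamicalPlan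

end

theorem mcp_almost_everywhere_convex_general
    {X : Type*} [MetricSpace X] [CompactSpace X] [MeasurableSpace X] [BorelSpace X]
    (m : Measure X) [IsProbabilityMeasure m]
    (C N : ℝ) (hC : 0 < C) (hN : 1 ≤ N)
    (hMCP : ∀ (x₀ : X) (A : Set X), MeasurableSet A → 0 < m A →
      ∃ Pl : Measure {γ : ℝ → X // ∀ s ∈ Icc (0:ℝ) 1, ∀ t ∈ Icc (0:ℝ) 1,
          dist (γ s) (γ t) = |s - t| * dist (γ 0) (γ 1)},
        IsProbabilityMeasure Pl ∧
        Measure.map (fun γ => γ.1 0) Pl = Measure.dirac x₀ ∧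
        Measure.map (fun γ => γ.1 1) Pl = (m A)⁻¹ • m.restrict A ∧
        ∀ t ∈ Ioc (0:ℝ) 1,
          Measure.map (fun γ => γ.1 t) Pl ≤ (ENNReal.ofReal (C / t ^ N) * (m A)⁻¹) • m)
    (Y : Set X) (hY : IsClosed Y)
    (A' : ℝ)
    (hthick : ∃ ε₀ > (0:ℝ), ∀ ε : ℝ, 0 < ε → ε < ε₀ →
      m (Metric.thickening ε Y) ≤ ENNReal.ofReal (A' * ε ^ 2)) :
    ∀ x₀ ∉ Y,
      m {y : X | ∀ γ : ℝ → X,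
        (∀ s ∈ Icc (0:ℝ) 1, ∀ t ∈ Icc (0:ℝ) 1,
          dist (γ s) (γ t) = |s - t| * dist (γ 0) (γ 1)) →
        γ 0 = x₀ → γ 1 = y → ∃ t ∈ Icc (0:ℝ) 1, γ t ∈ Y} = 0 := by
  intro x₀ hx₀
  obtain ⟨ε₀, hε₀, hthick⟩ := hthick
  change m (blockedEndpoints x₀ Y) = 0
  have hBm := measurableSet_blockedEndpoints x₀ hY
  by_contra hB
  obtain ⟨Pl, _, hPl0, hPl1, hPlt⟩ := hMCP x₀ _ hBm (pos_iff_ne_zero.2 hB)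
  have hae := ae_hits_of_map_eq hBm hPl0 hPl1
  obtain ⟨γ, -, t, -, hγt⟩ := hae.exists
  set D := diam (univ : Set X)
  have hD (x y : X) : dist x y ≤ D := dist_le_diam_of_mem isCompact_univ.isBounded trivial trivial
  have hδ : 0 < infDist x₀ Y := (hY.notMem_iff_infDist_pos ⟨_, hγt⟩).1 hx₀
  have hDpos : 0 < D := hδ.trans_le ((infDist_le_dist_of_mem hγt).trans (hD _ _))
  have hle : ∀ᶠ n : ℕ in atTop, m (blockedEndpoints x₀ Y) ≤
      ENNReal.ofReal (C / (infDist x₀ Y / D) ^ N) *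
        (n * ENNReal.ofReal (A' * (2 * D / n) ^ 2)) := by
    filter_upwards [eventually_gt_atTop 0,
      (tendsto_const_div_atTop_nhds_zero_nat (2 * D)).eventually (gt_mem_nhds hε₀)] with n hn hnε
    refine (measure_le_mul_measure_cthickening_of_ae_hits hB hδ hC.le (by linarith) hD hDpos hae
      hPlt hn).trans ?_
    gcongr
    exact (measure_mono (cthickening_subset_thickening' (by positivity)
      (div_lt_div_of_pos_right (by linarith) (by positivity)) Y)).trans
      (hthick _ (by positivity) hnε)
  have := ge_of_tendsto (ENNReal.Tendsto.const_mul
    (tendsto_natCast_mul_ofReal_mul_div_sq A' (2 * D)) (Or.inr ENNReal.ofReal_ne_top)) hle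
  exact hB (by simpa using this)

/-- on a compact geodesic metric measure space `(X,d,m)` (with `m` a
probability measure) satisfying the measure-contraction-type property — for any `x₀`
and any measurable `A` of positive measure there is a dynamical plan `Π` on the space
of constant-speed geodesics from `δ_{x₀}` to `m|_A / m(A)` with
`(e_t)_* Pl ≤ (C / t^N) · m / m(A)` for `t ∈ (0,1]` — if `Y` is closed with
`m(Y^ε) ≤ A' ε²` for all small `ε`, then for every `x₀ ∉ Y` the set of endpoints `y`
such that every constant-speed geodesic from `x₀` to `y` meets `Y` is `m`-null; i.e.
`X \ Y` is `m`-almost everywhere convex. -/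
theorem mcp_almost_everywhere_convex
    {X : Type*} [MetricSpace X] [CompactSpace X] [MeasurableSpace X] [BorelSpace X]
    (m : Measure X) [IsProbabilityMeasure m]
    (hgeo : ∀ x y : X, ∃ γ : ℝ → X,
      (∀ s ∈ Icc (0:ℝ) 1, ∀ t ∈ Icc (0:ℝ) 1,
        dist (γ s) (γ t) = |s - t| * dist (γ 0) (γ 1)) ∧ γ 0 = x ∧ γ 1 = y)
    (C N : ℝ) (hC : 0 < C) (hN : 1 ≤ N)
    (hMCP : ∀ (x₀ : X) (A : Set X), MeasurableSet A → 0 < m A →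
      ∃ Pl : Measure {γ : ℝ → X // ∀ s ∈ Icc (0:ℝ) 1, ∀ t ∈ Icc (0:ℝ) 1,
          dist (γ s) (γ t) = |s - t| * dist (γ 0) (γ 1)},
        IsProbabilityMeasure Pl ∧
        Measure.map (fun γ => γ.1 0) Pl = Measure.dirac x₀ ∧
        Measure.map (fun γ => γ.1 1) Pl = (m A)⁻¹ • m.restrict A ∧
        ∀ t ∈ Ioc (0:ℝ) 1,
          Measure.map (fun γ => γ.1 t) Pl ≤ (ENNReal.ofReal (C / t ^ N) * (m A)⁻¹) • m)
    (Y : Set X) (hY : IsClosed Y)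
    (A' : ℝ)
    (hthick : ∃ ε₀ > (0:ℝ), ∀ ε : ℝ, 0 < ε → ε < ε₀ →
      m (Metric.thickening ε Y) ≤ ENNReal.ofReal (A' * ε ^ 2)) :
    ∀ x₀ ∉ Y,
      m {y : X | ∀ γ : ℝ → X,
        (∀ s ∈ Icc (0:ℝ) 1, ∀ t ∈ Icc (0:ℝ) 1,
          dist (γ s) (γ t) = |s - t| * dist (γ 0) (γ 1)) →
        γ 0 = x₀ → γ 1 = y → ∃ t ∈ Icc (0:ℝ) 1, γ t ∈ Y} = 0 :=
  mcp_almost_everywhere_convex_general m C N hC hN hMCP Y hY A' hthick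
end

section
/- In the measure contraction setting above, for each fixed x₀ with d(x₀,Y) = δ > 0 and each dyadic scale ε = 2^{-l} with εD ≤ δ, the dynamical plan Π from δ_{x₀} to the normalized measure satisfies Π({γ : γ meets Y}) ≤ 2^{-l} · C · A · δ^{-N} · D^{N+2}, where A bounds m(Y^{εD}) ≤ A (εD)². -/
open MeasureTheory Set

/-!
Almost every geodesic of the plan starts at `x₀`, so if it meets `Y` at time `t` then
`δ ≤ t D`, and at the next dyadic time `k 2^{-l} ≥ t` it lies within `2^{-l} D` of `Y`.
Hence the geodesics meeting `Y` are covered, up to a null set, by the preimages of the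
thickening `Y^{2^{-l} D}` under at most `2^l` evaluation maps `e_{k 2^{-l}}` with
`k 2^{-l} ≥ δ / D`. The contraction estimate bounds each preimage by
`C (D/δ)^N m(Y^{2^{-l} D}) ≤ C (D/δ)^N A' (2^{-l} D)²`, and summing the `2^l` terms gives the claim.
-/

theorem exists_nat_mul_mem_Ico {ε t : ℝ} {n : ℕ} (hε : 0 < ε) (hnε : n * ε = 1)
    (ht : t ∈ Ioc (0:ℝ) 1) : ∃ k ∈ Finset.Icc 1 n, (k:ℝ) * ε ∈ Ico t (t + ε) := by
  have htε : 0 < t / ε := div_pos ht.1 hε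
  refine ⟨⌈t / ε⌉₊, Finset.mem_Icc.2 ⟨Nat.one_le_ceil_iff.2 htε, Nat.ceil_le.2 ?_⟩, ?_, ?_⟩
  · rw [div_le_iff₀ hε, hnε]
    exact ht.2
  · exact (div_le_iff₀ hε).1 (Nat.le_ceil _)
  · have := Nat.ceil_lt_add_one htε.le
    rwa [div_add_one hε.ne', lt_div_iff₀ hε] at this

theorem nat_mul_mem_Ioc_of_mem_Icc {ε : ℝ} {n k : ℕ} (hε : 0 < ε) (hnε : n * ε = 1)
    (hk : k ∈ Finset.Icc 1 n) : (k:ℝ) * ε ∈ Ioc (0:ℝ) 1 := by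
  obtain ⟨hk1, hkn⟩ := Finset.mem_Icc.1 hk
  refine ⟨by positivity, ?_⟩
  rw [← hnε]
  gcongr

theorem natCast_two_pow_mul_two_rpow_neg (l : ℕ) :
    ((2 ^ l : ℕ) : ℝ) * (2:ℝ) ^ (-(l:ℝ)) = 1 := by
  rw [Real.rpow_neg zero_le_two, Real.rpow_natCast]
  push_cast
  exact mul_inv_cancel₀ (by positivity)

theorem nat_mul_div_rpow_mul_sq_eq {n : ℕ} {ε C A δ D N : ℝ} (hnε : n * ε = 1) (hδ : 0 < δ)
    (hD : 0 < D) :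
    n * (C / (δ / D) ^ N * (A * (ε * D) ^ 2)) = ε * C * A * δ ^ (-N) * D ^ (N + 2) := by
  rw [Real.div_rpow hδ.le hD.le, Real.rpow_neg hδ.le, Real.rpow_add hD, Real.rpow_two]
  have := Real.rpow_pos_of_pos hδ N
  have := Real.rpow_pos_of_pos hD N
  field_simp
  linear_combination C * A * ε * hnε

abbrev ConstSpeedGeodesic (X : Type*) [PseudoMetricSpace X] : Type _ :=
  {γ : ℝ → X // ∀ s ∈ Icc (0:ℝ) 1, ∀ t ∈ Icc (0:ℝ) 1,
    dist (γ s) (γ t) = |s - t| * dist (γ 0) (γ 1)}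

namespace ConstSpeedGeodesic

variable {X : Type*} [PseudoMetricSpace X]

theorem dist_le_mul_diam [BoundedSpace X] (γ : ConstSpeedGeodesic X) {s t : ℝ}
    (hs : s ∈ Icc (0:ℝ) 1) (ht : t ∈ Icc (0:ℝ) 1) :
    dist (γ.1 s) (γ.1 t) ≤ |s - t| * Metric.diam (univ : Set X) := by
  rw [γ.2 s hs t ht]
  gcongr
  exact Metric.dist_le_diam_of_mem BoundedSpace.bounded_univ (mem_univ _) (mem_univ _)

theorem measurable_eval [MeasurableSpace X] (t : ℝ) :
    Measurable fun γ : ConstSpeedGeodesic X => γ.1 t :=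
  (measurable_pi_apply t).comp measurable_subtype_coe

theorem exists_dyadic_mem_thickening [BoundedSpace X] (γ : ConstSpeedGeodesic X) {Y : Set X}
    {δ D ε t : ℝ} {n : ℕ} (hδ : 0 < δ) (hδY : δ ≤ Metric.infDist (γ.1 0) Y)
    (hD : 0 < D) (hdiam : Metric.diam (univ : Set X) ≤ D) (hε : 0 < ε) (hnε : n * ε = 1)
    (ht : t ∈ Icc (0:ℝ) 1) (htY : γ.1 t ∈ Y) :
    ∃ k ∈ Finset.Icc 1 n, δ / D ≤ k * ε ∧ γ.1 (k * ε) ∈ Metric.thickening (ε * D) Y := by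
  have hdist : ∀ s ∈ Icc (0:ℝ) 1, dist (γ.1 s) (γ.1 t) ≤ |s - t| * D := fun s hs =>
    (γ.dist_le_mul_diam hs ht).trans (by gcongr)
  have hδt : δ / D ≤ t := by
    rw [div_le_iff₀ hD]
    calc δ ≤ dist (γ.1 0) (γ.1 t) := hδY.trans (Metric.infDist_le_dist_of_mem htY)
      _ ≤ |0 - t| * D := hdist 0 (left_mem_Icc.2 zero_le_one)
      _ = t * D := by rw [zero_sub, abs_neg, abs_of_nonneg ht.1]
  obtain ⟨k, hk, htk, hkt⟩ :=
    exists_nat_mul_mem_Ico hε hnε ⟨(div_pos hδ hD).trans_le hδt, ht.2⟩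
  refine ⟨k, hk, hδt.trans htk, Metric.mem_thickening_iff.2 ⟨γ.1 t, htY, ?_⟩⟩
  calc dist (γ.1 (k * ε)) (γ.1 t)
      ≤ |k * ε - t| * D := hdist _ (Ioc_subset_Icc_self (nat_mul_mem_Ioc_of_mem_Icc hε hnε hk))
    _ < ε * D := by
      gcongr
      rw [abs_of_nonneg (sub_nonneg.2 htk)]
      linarith

end ConstSpeedGeodesic

theorem ae_eq_of_map_eq_dirac {α β : Type*} [MeasurableSpace α] [MeasurableSpace β]
    [MeasurableSingletonClass β] {μ : Measure α} {f : α → β} {b : β} (hf : AEMeasurable f μ)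
    (h : μ.map f = Measure.dirac b) : ∀ᵐ a ∂μ, f a = b :=
  ae_of_ae_map (p := (· = b)) hf (by rw [h, ae_dirac_eq]; exact Filter.eventually_pure.2 rfl)

theorem mcp_dyadic_estimate_general
    {X : Type*} [MetricSpace X] [CompactSpace X] [MeasurableSpace X] [BorelSpace X]
    (m : Measure X)
    (C N : ℝ) (hC : 0 < C) (hN : 1 ≤ N)
    (Y : Set X)
    (x₀ : X)
    (δ D : ℝ) (hδ : δ = Metric.infDist x₀ Y) (hδpos : 0 < δ)
    (hD : D = Metric.diam (Set.univ : Set X)) (hDpos : 0 < D)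
    (l : ℕ)
    (A' : ℝ) (hA' : m (Metric.thickening ((2:ℝ)^(-(l:ℝ)) * D) Y) ≤
      ENNReal.ofReal (A' * ((2:ℝ)^(-(l:ℝ)) * D) ^ 2))
    (Pl : Measure {γ : ℝ → X // ∀ s ∈ Icc (0:ℝ) 1, ∀ t ∈ Icc (0:ℝ) 1,
        dist (γ s) (γ t) = |s - t| * dist (γ 0) (γ 1)})
    (hPl : IsProbabilityMeasure Pl)
    (hPl0 : Measure.map (fun γ => γ.1 0) Pl = Measure.dirac x₀)
    -- the normalized restriction of `Pl` to any set of geodesics of positive mass is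
    -- again a dynamical plan satisfying the measure contraction estimate
    (hMCP : ∀ Γ : Set {γ : ℝ → X // ∀ s ∈ Icc (0:ℝ) 1, ∀ t ∈ Icc (0:ℝ) 1,
        dist (γ s) (γ t) = |s - t| * dist (γ 0) (γ 1)},
      MeasurableSet Γ → 0 < Pl Γ → ∀ t ∈ Ioc (0:ℝ) 1,
        Measure.map (fun γ => γ.1 t) ((Pl Γ)⁻¹ • Pl.restrict Γ) ≤
          (ENNReal.ofReal (C / t ^ N) * (Pl Γ)⁻¹) • m) :
    Pl {γ | ∃ t ∈ Icc (0:ℝ) 1, γ.1 t ∈ Y} ≤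
      ENNReal.ofReal ((2:ℝ)^(-(l:ℝ)) * C * A' * δ ^ (-N) * D ^ (N + 2)) := by
  set ε : ℝ := (2:ℝ) ^ (-(l:ℝ))
  have hε : 0 < ε := by positivity
  have hnε : ((2 ^ l : ℕ) : ℝ) * ε = 1 := natCast_two_pow_mul_two_rpow_neg l
  set U := Metric.thickening (ε * D) Y
  set S := (Finset.Icc 1 (2 ^ l)).filter fun k : ℕ => δ / D ≤ k * ε
  have hstart : ∀ᵐ γ ∂Pl, γ.1 0 = x₀ :=
    ae_eq_of_map_eq_dirac (ConstSpeedGeodesic.measurable_eval 0).aemeasurable hPl0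
  have hcover : {γ | ∃ t ∈ Icc (0:ℝ) 1, γ.1 t ∈ Y} ≤ᵐ[Pl]
      (⋃ k ∈ S, (fun γ => γ.1 (k * ε)) ⁻¹' U : Set (ConstSpeedGeodesic X)) := by
    filter_upwards [hstart] with γ hγ ⟨t, ht, htY⟩
    obtain ⟨k, hk, hδk, hkU⟩ := ConstSpeedGeodesic.exists_dyadic_mem_thickening γ hδpos
      (hγ ▸ hδ.le) hDpos hD.ge hε hnε ht htY
    exact mem_biUnion (Finset.mem_filter.2 ⟨hk, hδk⟩) hkU
  have hpush : ∀ t ∈ Ioc (0:ℝ) 1, Pl.map (fun γ => γ.1 t) ≤ ENNReal.ofReal (C / t ^ N) • m :=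
    fun t ht => by simpa using hMCP univ MeasurableSet.univ (by simp) t ht
  have hpiece : ∀ k ∈ S, Pl ((fun γ => γ.1 (k * ε)) ⁻¹' U) ≤
      ENNReal.ofReal (C / (δ / D) ^ N) * m U := by
    intro k hk
    obtain ⟨hk, hδk⟩ := Finset.mem_filter.1 hk
    rw [← Measure.map_apply (ConstSpeedGeodesic.measurable_eval _)
      Metric.isOpen_thickening.measurableSet]
    refine (hpush _ (nat_mul_mem_Ioc_of_mem_Icc hε hnε hk) U).trans ?_
    rw [Measure.smul_apply, smul_eq_mul]
    gcongr
  calc Pl {γ | ∃ t ∈ Icc (0:ℝ) 1, γ.1 t ∈ Y}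
      ≤ S.card • (ENNReal.ofReal (C / (δ / D) ^ N) * m U) := (measure_mono_ae hcover).trans
        ((measure_biUnion_finset_le _ _).trans (Finset.sum_le_card_nsmul _ _ _ hpiece))
    _ ≤ ((2 ^ l : ℕ) : ENNReal) *
          (ENNReal.ofReal (C / (δ / D) ^ N) * ENNReal.ofReal (A' * (ε * D) ^ 2)) := by
        rw [nsmul_eq_mul]
        gcongr
        exact (Finset.card_filter_le _ _).trans (by simp)
    _ = _ := by
        rw [← ENNReal.ofReal_mul (by positivity), ← ENNReal.ofReal_natCast,
          ← ENNReal.ofReal_mul (by positivity), nat_mul_div_rpow_mul_sq_eq hnε hδpos hDpos]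

/-- in the measure contraction setting, with `δ = d(x₀,Y) > 0`,
`D = diam X`, and a dyadic scale `ε = 2^{-l}` with `ε D ≤ δ`, the dynamical plan `Pl`
from `δ_{x₀}` to `m` (whose normalized restrictions satisfy the contraction estimate)
gives mass at most `2^{-l} · C · A' · δ^{-N} · D^{N+2}` to the set of geodesics
meeting `Y`, where `m(Y^{εD}) ≤ A' (εD)²`. -/
theorem mcp_dyadic_estimate
    {X : Type*} [MetricSpace X] [CompactSpace X] [MeasurableSpace X] [BorelSpace X]
    (m : Measure X) [IsProbabilityMeasure m]
    (C N : ℝ) (hC : 0 < C) (hN : 1 ≤ N)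
    (Y : Set X) (hY : IsClosed Y)
    (x₀ : X) (hx₀ : x₀ ∉ Y)
    (δ D : ℝ) (hδ : δ = Metric.infDist x₀ Y) (hδpos : 0 < δ)
    (hD : D = Metric.diam (Set.univ : Set X)) (hDpos : 0 < D)
    (l : ℕ) (hl : (2:ℝ)^(-(l:ℝ)) * D ≤ δ)
    (A' : ℝ) (hA' : m (Metric.thickening ((2:ℝ)^(-(l:ℝ)) * D) Y) ≤
      ENNReal.ofReal (A' * ((2:ℝ)^(-(l:ℝ)) * D) ^ 2))
    (Pl : Measure {γ : ℝ → X // ∀ s ∈ Icc (0:ℝ) 1, ∀ t ∈ Icc (0:ℝ) 1,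
        dist (γ s) (γ t) = |s - t| * dist (γ 0) (γ 1)})
    (hPl : IsProbabilityMeasure Pl)
    (hPl0 : Measure.map (fun γ => γ.1 0) Pl = Measure.dirac x₀)
    (hPl1 : Measure.map (fun γ => γ.1 1) Pl = m)
    -- the normalized restriction of `Pl` to any set of geodesics of positive mass is
    -- again a dynamical plan satisfying the measure contraction estimate
    (hMCP : ∀ Γ : Set {γ : ℝ → X // ∀ s ∈ Icc (0:ℝ) 1, ∀ t ∈ Icc (0:ℝ) 1,
        dist (γ s) (γ t) = |s - t| * dist (γ 0) (γ 1)},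
      MeasurableSet Γ → 0 < Pl Γ → ∀ t ∈ Ioc (0:ℝ) 1,
        Measure.map (fun γ => γ.1 t) ((Pl Γ)⁻¹ • Pl.restrict Γ) ≤
          (ENNReal.ofReal (C / t ^ N) * (Pl Γ)⁻¹) • m) :
    Pl {γ | ∃ t ∈ Icc (0:ℝ) 1, γ.1 t ∈ Y} ≤
      ENNReal.ofReal ((2:ℝ)^(-(l:ℝ)) * C * A' * δ ^ (-N) * D ^ (N + 2)) :=
  mcp_dyadic_estimate_general m C N hC hN Y x₀ δ D hδ hδpos hD hDpos l A' hA' Pl hPl hPl0 hMCP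
end

section
/- For an n-dimensional Riemannian manifold and a point z where a Lipschitz function f is differentiable, the norm of the differential satisfies |D_z f| = (1/c_n) lim_{η→0} ⨍_{S^{n-1}} |f(exp_z(ηu)) − f(z)|/η du, where c_n = 2 / ((n−1) ∫₀^π sin^{n−2}(s) ds) and the average is over the unit sphere in T_zM. -/
/-!
The difference quotients `|f (z + η • u) - f z| / η` are bounded by the Lipschitz constant and
converge to `|D_z f u|`, so by dominated convergence their spherical averages tend to
`⨍ |⟪v, u⟫| du`, where `v` is the gradient of `f` at `z`. To evaluate this average, integrate
`|⟪v, x⟫| e^{-‖x‖²}` over `ℝⁿ` twice: in polar coordinates it is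
`(∫_S |⟪v, u⟫| du) · Γ((n+1)/2) / 2`, and after a reflection taking `v` to `‖v‖ e₁` Fubini gives
`‖v‖ π^{(n-1)/2}`. Dividing by `|S| = n π^{n/2} / Γ(n/2 + 1)` and using
`∫₀^π sin^k = √π Γ((k+1)/2) / Γ(k/2 + 1)` yields the constant `c_n`.
-/

open MeasureTheory Filter Real
open Set Metric Topology Module
open scoped RealInnerProductSpace

theorem integral_sin_pow_eq_mul_Gamma_div_Gamma (k : ℕ) :
    ∫ s in (0 : ℝ)..π, sin s ^ k = √π * Gamma ((k + 1) / 2) / Gamma (k / 2 + 1) := by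
  induction k using Nat.twoStepInduction with
  | zero =>
    rw [Nat.cast_zero, zero_add, zero_div, zero_add, Gamma_one, Gamma_one_half_eq]
    simp [mul_self_sqrt pi_pos.le]
  | one =>
    rw [Nat.cast_one, show ((1 : ℝ) + 1) / 2 = 1 by norm_num,
      show (1 : ℝ) / 2 + 1 = 1 / 2 + 1 by norm_num, Gamma_add_one one_half_pos.ne',
      Gamma_one_half_eq]
    simp [field, one_add_one_eq_two]
  | more k ih _ =>
    have hk : (k : ℝ) / 2 + 1 ≠ 0 := by positivity
    have hk' : ((k : ℝ) + 1) / 2 ≠ 0 := by positivity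
    rw [integral_sin_pow, ih]
    push_cast
    rw [show ((k : ℝ) + 2 + 1) / 2 = (k + 1) / 2 + 1 by ring,
      show (k + 2 : ℝ) / 2 + 1 = (k / 2 + 1) + 1 by ring, Gamma_add_one hk, Gamma_add_one hk']
    simp only [sin_zero, sin_pi, zero_pow k.succ_ne_zero, zero_mul, sub_self, zero_div, zero_add]
    field_simp

theorem Gamma_half_div_eq_two_div_integral_sin_pow {n : ℕ} (hn : 2 ≤ n) :
    Gamma (n / 2) / (√π * Gamma ((n + 1) / 2)) =
      2 / ((n - 1) * ∫ s in (0 : ℝ)..π, sin s ^ (n - 2)) := by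
  obtain ⟨k, rfl⟩ := Nat.exists_eq_add_of_le' hn
  rw [Nat.add_sub_cancel, integral_sin_pow_eq_mul_Gamma_div_Gamma]
  push_cast
  have hk : ((k : ℝ) + 1) / 2 ≠ 0 := by positivity
  rw [show ((k : ℝ) + 2 + 1) / 2 = (k + 1) / 2 + 1 by ring,
    show ((k : ℝ) + 2) / 2 = k / 2 + 1 by ring, show (k : ℝ) + 2 - 1 = k + 1 by ring,
    Gamma_add_one hk]
  field_simp

theorem integral_Ioi_pow_mul_exp_neg_sq (k : ℕ) :
    ∫ r in Ioi (0 : ℝ), r ^ k * exp (-r ^ 2) = Gamma ((k + 1) / 2) / 2 := by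
  rw [← one_div_mul_eq_div,
    ← integral_rpow_mul_exp_neg_rpow two_pos (by linarith [k.cast_nonneg (α := ℝ)])]
  refine setIntegral_congr_fun measurableSet_Ioi fun r _ ↦ ?_
  norm_cast

theorem integral_abs_mul_exp_neg_sq : ∫ t : ℝ, |t| * exp (-t ^ 2) = 1 := by
  have h := integral_Ioi_pow_mul_exp_neg_sq 1
  simp only [pow_one] at h
  calc ∫ t : ℝ, |t| * exp (-t ^ 2) = ∫ t : ℝ, |t| * exp (-|t| ^ 2) := by simp_rw [sq_abs]
    _ = 1 := by
      rw [integral_comp_abs (f := fun t ↦ t * exp (-t ^ 2)), h]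
      norm_num

section Polar

variable {E : Type*} [NormedAddCommGroup E] [NormedSpace ℝ E] [FiniteDimensional ℝ E]
  [MeasurableSpace E] [BorelSpace E] [Nontrivial E] (μ : Measure E) [μ.IsAddHaarMeasure]

theorem integral_homogeneous_mul_radial {g : E → ℝ}
    (hg : ∀ r : ℝ, 0 < r → ∀ x, g (r • x) = r * g x) (h : ℝ → ℝ) :
    ∫ x, g x * h ‖x‖ ∂μ =
      (∫ u : sphere (0 : E) 1, g u ∂μ.toSphere) * ∫ r in Ioi (0 : ℝ), r ^ finrank ℝ E * h r :=
  calc ∫ x, g x * h ‖x‖ ∂μ = ∫ x : ({0}ᶜ : Set E), g x * h ‖x.1‖ ∂(μ.comap (↑)) := by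
        rw [integral_subtype_comap (measurableSet_singleton _).compl fun x ↦ g x * h ‖x‖,
          restrict_compl_singleton]
    _ = ∫ p, g p.1 * (p.2 * h p.2) ∂μ.toSphere.prod (.volumeIoiPow (finrank ℝ E - 1)) := by
        rw [← μ.measurePreserving_homeomorphUnitSphereProd.integral_comp
          (Homeomorph.measurableEmbedding _)]
        refine integral_congr_ae (.of_forall fun x ↦ ?_)
        have hx : 0 < ‖x.1‖ := norm_pos_iff.2 x.2
        simp only [homeomorphUnitSphereProd_apply_fst_coe, homeomorphUnitSphereProd_apply_snd_coe,
          hg _ (inv_pos.2 hx)]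
        field_simp
    _ = (∫ u : sphere (0 : E) 1, g u ∂μ.toSphere) *
          ∫ r : Ioi (0 : ℝ), r.1 * h r ∂.volumeIoiPow (finrank ℝ E - 1) :=
        integral_prod_mul (fun u : sphere (0 : E) 1 ↦ g u) fun r : Ioi (0 : ℝ) ↦ r.1 * h r
    _ = _ := by
        simp only [Measure.volumeIoiPow, ENNReal.ofReal]
        rw [integral_withDensity_eq_integral_smul
            (measurable_subtype_coe.pow_const _).real_toNNReal,
          integral_subtype_comap measurableSet_Ioi
            fun a ↦ Real.toNNReal (a ^ (finrank ℝ E - 1)) • (a * h a),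
          setIntegral_congr_fun measurableSet_Ioi fun r hr ↦ ?_]
        rw [NNReal.smul_def, Real.coe_toNNReal _ (pow_nonneg hr.out.le _), smul_eq_mul,
          ← mul_assoc, ← pow_succ, Nat.sub_add_cancel finrank_pos]

end Polar

namespace EuclideanSpace

variable {ι : Type*} [Fintype ι]

theorem integral_abs_apply_mul_exp_neg_norm_sq (i : ι) :
    ∫ x : EuclideanSpace ℝ ι, |x i| * exp (-‖x‖ ^ 2) = √π ^ (Fintype.card ι - 1) := by
  classical
  rw [← (volume_preserving_symm_measurableEquiv_toLp ι).symm.integral_comp']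
  calc ∫ x : ι → ℝ, |x i| * exp (-‖WithLp.toLp 2 x‖ ^ 2)
      = ∫ x : ι → ℝ, ∏ j, (if j = i then |x j| else 1) * exp (-x j ^ 2) := by
        congr 1 with x
        rw [Finset.prod_mul_distrib, Finset.prod_ite_eq', if_pos (Finset.mem_univ i), ← exp_sum,
          Finset.sum_neg_distrib, EuclideanSpace.norm_sq_eq]
        simp
    _ = ∏ j, ∫ t : ℝ, (if j = i then |t| else 1) * exp (-t ^ 2) :=
        integral_fintype_prod_eq_prod fun j t ↦ (if j = i then |t| else 1) * exp (-t ^ 2)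
    _ = ∏ j, if j = i then 1 else √π := by
        refine Finset.prod_congr rfl fun j _ ↦ ?_
        split_ifs
        · exact integral_abs_mul_exp_neg_sq
        · simpa using integral_gaussian 1
    _ = √π ^ (Fintype.card ι - 1) := by
        simp [Finset.prod_ite, Finset.filter_ne', Finset.card_erase_of_mem]

theorem integral_abs_inner_mul_exp_neg_norm_sq [Nonempty ι] (v : EuclideanSpace ℝ ι) :
    ∫ x : EuclideanSpace ℝ ι, |⟪v, x⟫| * exp (-‖x‖ ^ 2) = ‖v‖ * √π ^ (Fintype.card ι - 1) := by
  classical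
  let i : ι := Classical.arbitrary ι
  have hnorm : ‖‖v‖ • single i (1 : ℝ)‖ = ‖v‖ := by simp [norm_smul]
  let R := (ℝ ∙ (‖v‖ • single i (1 : ℝ) - v))ᗮ.reflection
  have hRv : R (‖v‖ • single i 1) = v := Submodule.reflection_sub hnorm
  have hR : ∀ x, ⟪v, R x⟫ = ‖v‖ * x i := fun x ↦ by
    nth_rw 1 [← hRv]
    rw [LinearIsometryEquiv.inner_map_map, inner_smul_left, inner_single_left]
    simp
  rw [← R.measurePreserving.integral_comp R.toHomeomorph.measurableEmbedding]
  simp only [hR, LinearIsometryEquiv.norm_map, abs_mul, abs_norm, mul_assoc, integral_const_mul,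
    integral_abs_apply_mul_exp_neg_norm_sq]

theorem integral_sphere_abs_inner [Nonempty ι] (v : EuclideanSpace ℝ ι) :
    ∫ u : sphere (0 : EuclideanSpace ℝ ι) 1, |⟪v, u⟫| ∂volume.toSphere =
      2 * ‖v‖ * √π ^ (Fintype.card ι - 1) / Gamma ((Fintype.card ι + 1) / 2) := by
  have hpolar := integral_homogeneous_mul_radial volume
    (g := fun x : EuclideanSpace ℝ ι ↦ |⟪v, x⟫|)
    (fun r hr x ↦ by rw [inner_smul_right, abs_mul, abs_of_pos hr]) fun r ↦ exp (-r ^ 2)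
  rw [integral_abs_inner_mul_exp_neg_norm_sq, finrank_euclideanSpace,
    integral_Ioi_pow_mul_exp_neg_sq] at hpolar
  rw [eq_div_iff (by positivity), mul_assoc 2, hpolar]
  ring

theorem volume_toSphere_real_univ [Nonempty ι] :
    (volume : Measure (EuclideanSpace ℝ ι)).toSphere.real univ =
      Fintype.card ι * √π ^ Fintype.card ι / Gamma (Fintype.card ι / 2 + 1) := by
  rw [Measure.toSphere_real_apply_univ, measureReal_def, volume_ball, finrank_euclideanSpace]
  simp only [ENNReal.ofReal_one, one_pow, one_mul]
  rw [ENNReal.toReal_ofReal (by positivity), mul_div_assoc]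

theorem average_sphere_abs_inner [Nonempty ι] (v : EuclideanSpace ℝ ι) :
    ⨍ u : sphere (0 : EuclideanSpace ℝ ι) 1, |⟪v, u⟫| ∂volume.toSphere =
      Gamma (Fintype.card ι / 2) / (√π * Gamma ((Fintype.card ι + 1) / 2)) * ‖v‖ := by
  rw [average_eq, volume_toSphere_real_univ, integral_sphere_abs_inner, smul_eq_mul,
    Gamma_add_one (by positivity)]
  obtain ⟨k, hk⟩ := Nat.exists_eq_add_one.2 (Fintype.card_pos (α := ι))
  rw [hk, Nat.add_sub_cancel, pow_succ]
  field_simp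

end EuclideanSpace

section Slope

variable {E : Type*} [NormedAddCommGroup E] [NormedSpace ℝ E] {f : E → ℝ} {z : E}

theorem DifferentiableAt.tendsto_abs_slope (hf : DifferentiableAt ℝ f z) (v : E) :
    Tendsto (fun t : ℝ ↦ |f (z + t • v) - f z| / t) (𝓝[>] 0) (𝓝 |fderiv ℝ f z v|) := by
  have hslope := hasLineDerivAt_iff_tendsto_slope_zero.1 (hf.hasFDerivAt.hasLineDerivAt v)
  refine ((hslope.mono_left (nhdsGT_le_nhdsNE 0)).abs).congr' ?_
  filter_upwards [self_mem_nhdsWithin] with t (ht : 0 < t)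
  rw [smul_eq_mul, abs_mul, abs_inv, _root_.abs_of_pos ht, inv_mul_eq_div]

theorem LipschitzWith.abs_slope_le {K : NNReal} (hf : LipschitzWith K f) {t : ℝ} (ht : 0 < t)
    {v : E} (hv : ‖v‖ = 1) : |f (z + t • v) - f z| / t ≤ K := by
  rw [div_le_iff₀ ht]
  simpa [dist_eq_norm, norm_smul, hv, abs_of_pos ht] using hf.dist_le_mul (z + t • v) z

theorem tendsto_average_abs_slope_sphere [MeasurableSpace E] [OpensMeasurableSpace E]
    (μ : Measure (sphere (0 : E) 1)) [IsFiniteMeasure μ] {K : NNReal} (hf : LipschitzWith K f)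
    (hdiff : DifferentiableAt ℝ f z) :
    Tendsto (fun t : ℝ ↦ ⨍ u, |f (z + t • (u : E)) - f z| / t ∂μ) (𝓝[>] 0)
      (𝓝 (⨍ u, |fderiv ℝ f z u| ∂μ)) := by
  simp only [average_eq]
  refine Tendsto.const_smul ?_ _
  refine tendsto_integral_filter_of_dominated_convergence (fun _ ↦ (K : ℝ)) ?_ ?_
    (integrable_const _) (.of_forall fun u ↦ hdiff.tendsto_abs_slope u)
  · have := hf.continuous
    exact .of_forall fun t ↦ (by fun_prop : Continuous fun u : sphere (0 : E) 1 ↦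
      |f (z + t • (u : E)) - f z| / t).aestronglyMeasurable
  · filter_upwards [self_mem_nhdsWithin] with t (ht : 0 < t)
    refine .of_forall fun u ↦ ?_
    rw [Real.norm_eq_abs, abs_div, abs_abs, abs_of_pos ht]
    exact hf.abs_slope_le ht (norm_eq_of_mem_sphere u)

end Slope

/-- at a point `z` of differentiability of a Lipschitz function `f` on
an `n`-dimensional Riemannian manifold (model case: `ℝⁿ`, where `exp_z (η u) = z + η u`),
the norm of the differential satisfies
`|D_z f| = (1/c_n) lim_{η→0⁺} ⨍_{S^{n-1}} |f(exp_z(ηu)) - f z| / η du`,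
with `c_n = 2 / ((n-1) ∫₀^π sin^{n-2}(s) ds)` and the average taken over the unit
sphere in `T_z M`. -/
theorem norm_differential_spherical_average
    {n : ℕ} (hn : 2 ≤ n)
    (f : EuclideanSpace ℝ (Fin n) → ℝ) (hf : ∃ K, LipschitzWith K f)
    (z : EuclideanSpace ℝ (Fin n)) (hdiff : DifferentiableAt ℝ f z) :
    ‖fderiv ℝ f z‖ =
      (2 / ((n - 1 : ℝ) * ∫ s in (0:ℝ)..π, Real.sin s ^ (n - 2)))⁻¹ *
        (limUnder (nhdsWithin (0:ℝ) (Set.Ioi 0)) fun η =>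
          ⨍ u, |f (z + η • (u : EuclideanSpace ℝ (Fin n))) - f z| / η
            ∂(volume : Measure (EuclideanSpace ℝ (Fin n))).toSphere) ∧
    Tendsto
      (fun η => ⨍ u, |f (z + η • (u : EuclideanSpace ℝ (Fin n))) - f z| / η
          ∂(volume : Measure (EuclideanSpace ℝ (Fin n))).toSphere)
      (nhdsWithin (0:ℝ) (Set.Ioi 0))
      (nhds ((2 / ((n - 1 : ℝ) * ∫ s in (0:ℝ)..π, Real.sin s ^ (n - 2))) *
        ‖fderiv ℝ f z‖)) := by
  obtain ⟨K, hK⟩ := hf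
  have : Nonempty (Fin n) := ⟨⟨0, by omega⟩⟩
  have hc : 0 < 2 / ((n - 1 : ℝ) * ∫ s in (0:ℝ)..π, Real.sin s ^ (n - 2)) := by
    have : (1 : ℝ) < n := by exact_mod_cast hn
    exact div_pos two_pos (mul_pos (by linarith) (integral_sin_pow_pos _))
  -- Write `D_z f u = ⟪v, u⟫` with `v` the gradient, which has the norm of `D_z f`.
  have hlimit : ⨍ u : sphere (0 : EuclideanSpace ℝ (Fin n)) 1, |fderiv ℝ f z u| ∂volume.toSphere
      = 2 / ((n - 1 : ℝ) * ∫ s in (0:ℝ)..π, Real.sin s ^ (n - 2)) * ‖fderiv ℝ f z‖ := by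
    simp_rw [← InnerProductSpace.toDual_symm_apply (y := fderiv ℝ f z)]
    rw [EuclideanSpace.average_sphere_abs_inner, LinearIsometryEquiv.norm_map, Fintype.card_fin,
      Gamma_half_div_eq_two_div_integral_sin_pow hn]
  have hT := tendsto_average_abs_slope_sphere volume.toSphere hK hdiff
  rw [hlimit] at hT
  exact ⟨by rw [hT.limUnder_eq, inv_mul_cancel_left₀ hc.ne'], hT⟩
end

section
/- Let (X,g) be a compact Riemannian manifold (or the regular part of a compact stratified space with suitable cut-off functions) and φ an eigenfunction of the Laplacian with Δφ = λφ, φ smooth on an open dense set X^reg, |∇φ| ∈ L^∞, and suppose Ric ≥ K on X^reg and there exist cut-offs ρ_ε ∈ C_c^∞(X^reg) with 0 ≤ ρ_ε ≤ 1, ‖∇ρ_ε‖_{L²} → 0, ‖Δρ_ε‖_{L¹} → 0, ρ_ε → 1 pointwise. Then for every nonnegative ψ with ψ, Δψ ∈ L^∞, the integrated Bochner inequality holds: −(1/2)∫ Δψ |dφ|² + ∫ ψ ⟨∇Δφ, ∇φ⟩ ≥ ∫ ψ (K|dφ|² + (Δφ)²/n). -/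
open MeasureTheory Filter Topology

/-!
Multiply the pointwise Bochner inequality by `ρ_ε ψ ≥ 0` and integrate. Integration by parts moves
the Laplacian from `|dφ|²` onto `ρ_ε ψ`; the terms carrying `Δρ_ε` and `∇ρ_ε` vanish as `ε → 0`
because `ψ` and `|dφ|²` are bounded (for `∇ρ_ε`, after Cauchy–Schwarz against `|∇ψ| ∈ L²`).
On the other side `Δ|dφ|²` is not known to be integrable, so `ε → 0` cannot be taken by dominated
convergence directly; instead dominated convergence is applied to the positive part of the
`ρ_ε`-weighted integrand, which the Bochner inequality dominates by an integrable function.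
-/

section

variable {X ι : Type*} [MeasurableSpace X] {μ : Measure X} {l : Filter ι}

lemma memLp_two_abs_of_integrable_sq {f : X → ℝ} (hf : Integrable (fun x => f x ^ 2) μ) :
    MemLp (fun x => |f x|) 2 μ := by
  have hmeas : AEStronglyMeasurable (fun x => |f x|) μ := by
    simpa only [Real.sqrt_sq_eq_abs] using
      Real.continuous_sqrt.comp_aestronglyMeasurable hf.aestronglyMeasurable
  exact (memLp_two_iff_integrable_sq hmeas).2 (by simpa only [sq_abs] using hf)

lemma integrable_abs_mul_abs_of_integrable_sq {f g : X → ℝ}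
    (hf : Integrable (fun x => f x ^ 2) μ) (hg : Integrable (fun x => g x ^ 2) μ) :
    Integrable (fun x => |f x| * |g x|) μ :=
  (memLp_two_abs_of_integrable_sq hf).integrable_mul (memLp_two_abs_of_integrable_sq hg)

lemma integral_abs_mul_abs_le_of_integrable_sq {f g : X → ℝ}
    (hf : Integrable (fun x => f x ^ 2) μ) (hg : Integrable (fun x => g x ^ 2) μ) :
    ∫ x, |f x| * |g x| ∂μ ≤ √(∫ x, f x ^ 2 ∂μ) * √(∫ x, g x ^ 2 ∂μ) := by
  have hcs := integral_mul_le_Lp_mul_Lq_of_nonneg Real.HolderConjugate.two_two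
    (ae_of_all μ fun x => abs_nonneg (f x)) (ae_of_all μ fun x => abs_nonneg (g x))
    (by simpa using memLp_two_abs_of_integrable_sq hf)
    (by simpa using memLp_two_abs_of_integrable_sq hg)
  simpa only [Real.rpow_two, sq_abs, Real.sqrt_eq_rpow] using hcs

lemma tendsto_integral_mul_zero_of_abs_le_mul {c b : ι → X → ℝ} {a e : X → ℝ} {M : ℝ}
    (he : ∀ x, |e x| ≤ M) (ha : Integrable (fun x => a x ^ 2) μ)
    (hb : ∀ᶠ i in l, Integrable (fun x => b i x ^ 2) μ)
    (hc : ∀ᶠ i in l, ∀ x, |c i x| ≤ a x * b i x)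
    (hb0 : Tendsto (fun i => ∫ x, b i x ^ 2 ∂μ) l (𝓝 0)) :
    Tendsto (fun i => ∫ x, c i x * e x ∂μ) l (𝓝 0) := by
  have hbound : ∀ᶠ i in l,
      ‖∫ x, c i x * e x ∂μ‖ ≤ |M| * (√(∫ x, a x ^ 2 ∂μ) * √(∫ x, b i x ^ 2 ∂μ)) := by
    filter_upwards [hb, hc] with i hbi hci
    calc ‖∫ x, c i x * e x ∂μ‖ ≤ ∫ x, ‖c i x * e x‖ ∂μ := norm_integral_le_integral_norm _
      _ ≤ ∫ x, |M| * (|a x| * |b i x|) ∂μ := by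
        refine integral_mono_of_nonneg (ae_of_all μ fun x => norm_nonneg _)
          ((integrable_abs_mul_abs_of_integrable_sq ha hbi).const_mul |M|) (ae_of_all μ fun x => ?_)
        dsimp only
        rw [Real.norm_eq_abs, abs_mul, mul_comm |M|]
        exact mul_le_mul ((hci x).trans ((le_abs_self _).trans_eq (abs_mul _ _)))
          ((he x).trans (le_abs_self M)) (abs_nonneg _) (by positivity)
      _ = |M| * ∫ x, |a x| * |b i x| ∂μ := integral_const_mul _ _
      _ ≤ _ := mul_le_mul_of_nonneg_left (integral_abs_mul_abs_le_of_integrable_sq ha hbi)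
          (abs_nonneg M)
  refine squeeze_zero_norm' hbound ?_
  simpa using (hb0.sqrt.const_mul √(∫ x, a x ^ 2 ∂μ)).const_mul |M|

lemma tendsto_integral_mul_zero_of_tendsto_integral_abs {u : X → ℝ} {v : ι → X → ℝ} {M : ℝ}
    (hu : ∀ x, |u x| ≤ M) (hv : ∀ᶠ i in l, Integrable (fun x => |v i x|) μ)
    (hv0 : Tendsto (fun i => ∫ x, |v i x| ∂μ) l (𝓝 0)) :
    Tendsto (fun i => ∫ x, u x * v i x ∂μ) l (𝓝 0) := by
  have hbound : ∀ᶠ i in l, ‖∫ x, u x * v i x ∂μ‖ ≤ M * ∫ x, |v i x| ∂μ := by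
    filter_upwards [hv] with i hvi
    calc ‖∫ x, u x * v i x ∂μ‖ ≤ ∫ x, ‖u x * v i x‖ ∂μ := norm_integral_le_integral_norm _
      _ ≤ ∫ x, M * |v i x| ∂μ :=
        integral_mono_of_nonneg (ae_of_all μ fun x => norm_nonneg _) (hvi.const_mul M)
          (ae_of_all μ fun x => by
            simpa only [Real.norm_eq_abs, abs_mul] using
              mul_le_mul_of_nonneg_right (hu x) (abs_nonneg (v i x)))
      _ = M * ∫ x, |v i x| ∂μ := integral_const_mul _ _
  exact squeeze_zero_norm' hbound (by simpa using hv0.const_mul M)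

lemma tendsto_integral_mul_of_tendsto_one [l.IsCountablyGenerated] {ρ : ι → X → ℝ}
    {f : X → ℝ} (hf : Integrable f μ)
    (hρf : ∀ᶠ i in l, AEStronglyMeasurable (fun x => ρ i x * f x) μ)
    (hρ : ∀ᶠ i in l, ∀ x, |ρ i x| ≤ 1) (hρ1 : ∀ᵐ x ∂μ, Tendsto (fun i => ρ i x) l (𝓝 1)) :
    Tendsto (fun i => ∫ x, ρ i x * f x ∂μ) l (𝓝 (∫ x, f x ∂μ)) := by
  refine tendsto_integral_filter_of_dominated_convergence (fun x => ‖f x‖) hρf ?_ hf.norm ?_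
  · filter_upwards [hρ] with i hρi
    refine ae_of_all μ fun x => ?_
    simpa only [norm_mul, Real.norm_eq_abs, one_mul] using
      mul_le_mul_of_nonneg_right (hρi x) (norm_nonneg (f x))
  · filter_upwards [hρ1] with x hx
    simpa only [one_mul] using hx.mul_const (f x)

lemma tendsto_integral_cutoff_mul_laplacian [l.IsCountablyGenerated]
    {ρ gρ Δρ cross : ι → X → ℝ} {ψ Δψ e Δe gψ : X → ℝ} {M Me : ℝ}
    (hψe : ∀ x, |ψ x * e x| ≤ M) (he : ∀ x, |e x| ≤ Me)
    (hρ : ∀ᶠ i in l, ∀ x, |ρ i x| ≤ 1) (hρ1 : ∀ᵐ x ∂μ, Tendsto (fun i => ρ i x) l (𝓝 1))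
    (hΔψe : Integrable (fun x => Δψ x * e x) μ)
    (hρΔψe : ∀ᶠ i in l, AEStronglyMeasurable (fun x => ρ i x * Δψ x * e x) μ)
    (hΔρ : ∀ᶠ i in l, Integrable (fun x => |Δρ i x|) μ)
    (hΔρ0 : Tendsto (fun i => ∫ x, |Δρ i x| ∂μ) l (𝓝 0))
    (hgψ : Integrable (fun x => gψ x ^ 2) μ) (hgρ : ∀ᶠ i in l, Integrable (fun x => gρ i x ^ 2) μ)
    (hgρ0 : Tendsto (fun i => ∫ x, gρ i x ^ 2 ∂μ) l (𝓝 0))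
    (hcross : ∀ᶠ i in l, ∀ x, |cross i x| ≤ gψ x * gρ i x)
    (hIBP : ∀ᶠ i in l, ∫ x, ρ i x * ψ x * Δe x ∂μ =
      (∫ x, ρ i x * Δψ x * e x ∂μ) + (∫ x, ψ x * Δρ i x * e x ∂μ) -
        2 * ∫ x, cross i x * e x ∂μ) :
    Tendsto (fun i => ∫ x, ρ i x * ψ x * Δe x ∂μ) l (𝓝 (∫ x, Δψ x * e x ∂μ)) := by
  have hA := tendsto_integral_mul_of_tendsto_one hΔψe
    (hρΔψe.mono fun i hi => by simpa only [mul_assoc] using hi) hρ hρ1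
  have hB := tendsto_integral_mul_zero_of_tendsto_integral_abs hψe hΔρ hΔρ0
  have hC := tendsto_integral_mul_zero_of_abs_le_mul he hgψ hgρ hcross hgρ0
  have hlim := (hA.add hB).sub (hC.const_mul 2)
  rw [add_zero, mul_zero, sub_zero] at hlim
  refine hlim.congr' (hIBP.mono fun i hi => ?_)
  beta_reduce
  rw [hi]
  simp only [mul_assoc, mul_comm (e _) (Δρ i _)]

lemma add_mul_le_abs {a b r : ℝ} (hr0 : 0 ≤ r) (hr1 : r ≤ 1) (hab : a + b ≤ 0) :
    a + r * b ≤ |a| := by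
  nlinarith [le_abs_self a, abs_nonneg a]

lemma nonpos_of_tendsto_integral_of_le [l.NeBot] [l.IsCountablyGenerated]
    {F : ι → X → ℝ} {f g : X → ℝ} {c : ℝ} (hg : Integrable g μ)
    (hF : ∀ᶠ i in l, Integrable (F i) μ) (hFg : ∀ᶠ i in l, ∀ᵐ x ∂μ, F i x ≤ g x)
    (hFf : ∀ᵐ x ∂μ, Tendsto (fun i => F i x) l (𝓝 (f x))) (hf : ∀ᵐ x ∂μ, f x ≤ 0)
    (hc : Tendsto (fun i => ∫ x, F i x ∂μ) l (𝓝 c)) : c ≤ 0 := by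
  have hpos : Tendsto (fun i => ∫ x, max (F i x) 0 ∂μ) l (𝓝 (∫ _, (0 : ℝ) ∂μ)) := by
    refine tendsto_integral_filter_of_dominated_convergence (fun x => |g x|)
      (hF.mono fun i hi => hi.pos_part.aestronglyMeasurable) ?_ hg.abs ?_
    · filter_upwards [hFg] with i hi
      filter_upwards [hi] with x hx
      rw [Real.norm_eq_abs, abs_of_nonneg (le_max_right _ _)]
      exact max_le (hx.trans (le_abs_self _)) (abs_nonneg _)
    · filter_upwards [hFf, hf] with x hx hfx
      simpa only [max_eq_right hfx] using hx.max (tendsto_const_nhds (x := (0 : ℝ)))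
  rw [integral_zero] at hpos
  exact le_of_tendsto_of_tendsto hc hpos
    (hF.mono fun i hi => integral_mono hi hi.pos_part fun x => le_max_left _ _)

lemma integral_add_nonpos_of_tendsto_integral_mul [l.NeBot] [l.IsCountablyGenerated]
    {ρ : ι → X → ℝ} {a b : X → ℝ} {β : ℝ} (ha : Integrable a μ)
    (hρb : ∀ᶠ i in l, Integrable (fun x => ρ i x * b x) μ)
    (hρ : ∀ᶠ i in l, ∀ x, 0 ≤ ρ i x ∧ ρ i x ≤ 1)
    (hρ1 : ∀ᵐ x ∂μ, Tendsto (fun i => ρ i x) l (𝓝 1)) (hab : ∀ᵐ x ∂μ, a x + b x ≤ 0)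
    (hβ : Tendsto (fun i => ∫ x, ρ i x * b x ∂μ) l (𝓝 β)) :
    ∫ x, a x ∂μ + β ≤ 0 := by
  refine nonpos_of_tendsto_integral_of_le (F := fun i x => a x + ρ i x * b x) ha.abs
    (hρb.mono fun i hi => ha.add hi) ?_ ?_ hab ?_
  · filter_upwards [hρ] with i hρi
    filter_upwards [hab] with x hx
    exact add_mul_le_abs (hρi x).1 (hρi x).2 hx
  · filter_upwards [hρ1] with x hx
    simpa only [one_mul] using tendsto_const_nhds.add (hx.mul_const (b x))
  · refine (tendsto_const_nhds.add hβ).congr' ?_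
    filter_upwards [hρb] with i hi
    exact (integral_add ha hi).symm

end

theorem integrated_bochner_inequality_general
    {X : Type*} [MeasurableSpace X] (μ : Measure X)
    (Xreg : Set X) (hfull : μ Xregᶜ = 0)
    (n : ℕ) (K lam : ℝ)
    (e Δe q h ψ Δψf gψ : X → ℝ)
    (he : ∀ x, 0 ≤ e x) (hebd : ∃ M, ∀ x, e x ≤ M)
    (hq : ∀ x, q x = lam * e x)
    (hψpos : ∀ x, 0 ≤ ψ x) (hψbd : ∃ M, ∀ x, ψ x ≤ M ∧ |Δψf x| ≤ M)
    (hgψ : Integrable (fun x => gψ x ^ 2) μ)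
    -- pointwise Bochner formula + `Ric ≥ K` + Cauchy–Schwarz on the regular set
    (hBochner : ∀ x ∈ Xreg, K * e x + h x / n ≤ -(1 / 2) * Δe x + lam * e x)
    -- the cut-off family and the integration by parts identity
    (ρ gρ Δρ : ℝ → X → ℝ) (cross : ℝ → X → ℝ)
    (hρ01 : ∀ ε > (0:ℝ), ∀ x, 0 ≤ ρ ε x ∧ ρ ε x ≤ 1)
    (hgρ : Tendsto (fun ε => ∫ x, (gρ ε x) ^ 2 ∂μ) (nhdsWithin 0 (Set.Ioi 0)) (nhds 0))
    (hΔρ : Tendsto (fun ε => ∫ x, |Δρ ε x| ∂μ) (nhdsWithin 0 (Set.Ioi 0)) (nhds 0))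
    (hρ1 : ∀ x ∈ Xreg, Tendsto (fun ε => ρ ε x) (nhdsWithin 0 (Set.Ioi 0)) (nhds 1))
    (hcross : ∀ ε > (0:ℝ), ∀ x, |cross ε x| ≤ gψ x * gρ ε x)
    (hIBP : ∀ ε > (0:ℝ),
      ∫ x, ρ ε x * ψ x * Δe x ∂μ =
        (∫ x, ρ ε x * Δψf x * e x ∂μ) + (∫ x, ψ x * Δρ ε x * e x ∂μ) -
          2 * ∫ x, cross ε x * e x ∂μ)
    -- integrability of all the integrands involved
    (hint : Integrable (fun x => Δψf x * e x) μ ∧ Integrable (fun x => ψ x * e x) μ ∧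
      Integrable (fun x => ψ x * h x) μ ∧
      ∀ ε > (0:ℝ), Integrable (fun x => ρ ε x * ψ x * Δe x) μ ∧
        Integrable (fun x => ρ ε x * Δψf x * e x) μ ∧
        Integrable (fun x => ψ x * Δρ ε x * e x) μ ∧
        Integrable (fun x => cross ε x * e x) μ ∧
        Integrable (fun x => gρ ε x ^ 2) μ ∧ Integrable (fun x => |Δρ ε x|) μ) :
    -(1 / 2) * (∫ x, Δψf x * e x ∂μ) + (∫ x, ψ x * q x ∂μ) ≥
      ∫ x, (K * (ψ x * e x) + ψ x * h x / n) ∂μ := by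
  obtain ⟨hΔψe, hψe, hψh, hintε⟩ := hint
  obtain ⟨Me, hMe⟩ := hebd
  obtain ⟨Mψ, hMψ⟩ := hψbd
  have hreg : ∀ᵐ x ∂μ, x ∈ Xreg := ae_iff.2 hfull
  have hε : ∀ᶠ ε in 𝓝[>] (0 : ℝ), 0 < ε := eventually_mem_nhdsWithin
  have habs_e : ∀ x, |e x| ≤ Me := fun x => (abs_of_nonneg (he x)).trans_le (hMe x)
  have habs_ψe : ∀ x, |ψ x * e x| ≤ Mψ * Me := fun x => by
    rw [abs_of_nonneg (mul_nonneg (hψpos x) (he x))]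
    exact mul_le_mul (hMψ x).1 (hMe x) (he x) ((hψpos x).trans (hMψ x).1)
  have hcut := tendsto_integral_cutoff_mul_laplacian habs_ψe habs_e
    (hε.mono fun ε hε x => abs_le.2 ⟨by linarith [(hρ01 ε hε x).1], (hρ01 ε hε x).2⟩)
    (hreg.mono hρ1) hΔψe (hε.mono fun ε hε => (hintε ε hε).2.1.aestronglyMeasurable)
    (hε.mono fun ε hε => (hintε ε hε).2.2.2.2.2) hΔρ hgψ
    (hε.mono fun ε hε => (hintε ε hε).2.2.2.2.1) hgρ (hε.mono hcross) (hε.mono hIBP)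
  set L : X → ℝ := fun x => K * (ψ x * e x) + ψ x * h x / n - lam * (ψ x * e x)
  have hRHS : Integrable (fun x => K * (ψ x * e x) + ψ x * h x / n) μ :=
    (hψe.const_mul K).add (hψh.div_const n)
  have hLint : Integrable L μ := hRHS.sub (hψe.const_mul lam)
  have hLΔe : ∀ x ∈ Xreg, 2 * L x + ψ x * Δe x ≤ 0 := fun x hx => by
    linear_combination 2 * mul_le_mul_of_nonneg_left (hBochner x hx) (hψpos x)
  have hkey := integral_add_nonpos_of_tendsto_integral_mul (hLint.const_mul 2)
    (hε.mono fun ε hε => by simpa only [mul_assoc] using (hintε ε hε).1)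
    (hε.mono hρ01) (hreg.mono hρ1) (hreg.mono hLΔe) (by simpa only [mul_assoc] using hcut)
  have hψq : ∫ x, ψ x * q x ∂μ = lam * ∫ x, ψ x * e x ∂μ := by
    simp only [hq, mul_left_comm (ψ _), integral_const_mul]
  have hLeq : ∫ x, L x ∂μ =
      ∫ x, (K * (ψ x * e x) + ψ x * h x / n) ∂μ - lam * ∫ x, ψ x * e x ∂μ := by
    rw [← integral_const_mul]
    exact integral_sub hRHS (hψe.const_mul lam)
  rw [integral_const_mul, hLeq] at hkey
  rw [ge_iff_le, hψq]
  linarith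

/-- integrated Bochner inequality for an eigenfunction `φ` (`Δφ = λφ`)
on (the regular set `Xreg` of) a compact stratified space with `Ric ≥ K` and suitable
cut-off functions.  Here `e = |dφ|²` (bounded), `Δe` its pointwise Laplacian on
`Xreg`, `q = ⟨∇Δφ, ∇φ⟩ = λ e`, `h = (Δφ)²`, and `ψ ≥ 0` a test function with `ψ, Δψ`
bounded and `|∇ψ| ∈ L²`.  The pointwise Bochner formula combined with `Ric ≥ K` and
Cauchy–Schwarz gives `-(1/2)Δe + λ e ≥ K e + h/n` on `Xreg`; the cut-offs `ρ_ε`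
satisfy `0 ≤ ρ_ε ≤ 1`, supported in `Xreg`, `‖∇ρ_ε‖_{L²} → 0`, `‖Δρ_ε‖_{L¹} → 0`,
`ρ_ε → 1` on `Xreg`, together with the integration by parts identity.  Conclusion:
`-(1/2)∫ Δψ |dφ|² + ∫ ψ ⟨∇Δφ,∇φ⟩ ≥ ∫ ψ (K |dφ|² + (Δφ)²/n)`. -/
theorem integrated_bochner_inequality
    {X : Type*} [MeasurableSpace X] (μ : Measure X) [IsFiniteMeasure μ]
    (Xreg : Set X) (hXreg : MeasurableSet Xreg) (hfull : μ Xregᶜ = 0)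
    (n : ℕ) (hn : 1 ≤ n) (K lam : ℝ)
    (e Δe q h ψ Δψf gψ : X → ℝ)
    (he : ∀ x, 0 ≤ e x) (hebd : ∃ M, ∀ x, e x ≤ M)
    (hh : ∀ x, 0 ≤ h x)
    (hq : ∀ x, q x = lam * e x)
    (hψpos : ∀ x, 0 ≤ ψ x) (hψbd : ∃ M, ∀ x, ψ x ≤ M ∧ |Δψf x| ≤ M)
    (hgψ : Integrable (fun x => gψ x ^ 2) μ) (hgψpos : ∀ x, 0 ≤ gψ x)
    -- pointwise Bochner formula + `Ric ≥ K` + Cauchy–Schwarz on the regular set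
    (hBochner : ∀ x ∈ Xreg, K * e x + h x / n ≤ -(1 / 2) * Δe x + lam * e x)
    -- the cut-off family and the integration by parts identity
    (ρ gρ Δρ : ℝ → X → ℝ) (cross : ℝ → X → ℝ)
    (hρ01 : ∀ ε > (0:ℝ), ∀ x, 0 ≤ ρ ε x ∧ ρ ε x ≤ 1)
    (hρsupp : ∀ ε > (0:ℝ), ∀ x ∉ Xreg, ρ ε x = 0)
    (hgρ : Tendsto (fun ε => ∫ x, (gρ ε x) ^ 2 ∂μ) (nhdsWithin 0 (Set.Ioi 0)) (nhds 0))
    (hΔρ : Tendsto (fun ε => ∫ x, |Δρ ε x| ∂μ) (nhdsWithin 0 (Set.Ioi 0)) (nhds 0))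
    (hρ1 : ∀ x ∈ Xreg, Tendsto (fun ε => ρ ε x) (nhdsWithin 0 (Set.Ioi 0)) (nhds 1))
    (hcross : ∀ ε > (0:ℝ), ∀ x, |cross ε x| ≤ gψ x * gρ ε x)
    (hIBP : ∀ ε > (0:ℝ),
      ∫ x, ρ ε x * ψ x * Δe x ∂μ =
        (∫ x, ρ ε x * Δψf x * e x ∂μ) + (∫ x, ψ x * Δρ ε x * e x ∂μ) -
          2 * ∫ x, cross ε x * e x ∂μ)
    -- integrability of all the integrands involved
    (hint : Integrable (fun x => Δψf x * e x) μ ∧ Integrable (fun x => ψ x * e x) μ ∧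
      Integrable (fun x => ψ x * h x) μ ∧
      ∀ ε > (0:ℝ), Integrable (fun x => ρ ε x * ψ x * Δe x) μ ∧
        Integrable (fun x => ρ ε x * Δψf x * e x) μ ∧
        Integrable (fun x => ψ x * Δρ ε x * e x) μ ∧
        Integrable (fun x => cross ε x * e x) μ ∧
        Integrable (fun x => gρ ε x ^ 2) μ ∧ Integrable (fun x => |Δρ ε x|) μ) :
    -(1 / 2) * (∫ x, Δψf x * e x ∂μ) + (∫ x, ψ x * q x ∂μ) ≥
      ∫ x, (K * (ψ x * e x) + ψ x * h x / n) ∂μ :=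
  integrated_bochner_inequality_general μ Xreg hfull n K lam e Δe q h ψ Δψf gψ he hebd hq hψpos hψbd
    hgψ hBochner ρ gρ Δρ cross hρ01 hgρ hΔρ hρ1 hcross hIBP hint
end
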